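/- Let k be a field of characteristic zero, A = k[X₀,X₁] the polynomial ring in two variables over k, I ⊆ A an ideal, R = A/I, and π : A → R the quotient map. Suppose τ̃ is a k-derivation of A with τ̃(I) ⊆ I, and let τ be the induced k-derivation of R (i.e. τ(π(a)) = π(τ̃(a)) for all a ∈ A). Assume that the map R → Der_k(R), r ↦ r·τ, is bijective, and that Der_k(R) is a simple Lie algebra over k. Then for every D ∈ Der_k(R) there exist f, g ∈ R such that D = ⁅τ, f·τ⁆ + ⁅π(X₁)·τ, g·τ⁆. -/

import Mathlib

/-!
Every derivation of `R` is a multiple `r • τ`, and `⁅a • τ, b • τ⁆ = (a * τ b - b * τ a) • τ`.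
The coefficient of `⁅τ, f • τ⁆ + ⁅y • τ, g • τ⁆` is `τ f + (y * τ g - g * τ y)`; these coefficients
form a `k`-subspace, and it suffices that it contains every `b * τ a`: then the corresponding
subspace of derivations contains all brackets, so by simplicity it is everything. By the Leibniz
rule it is enough to take `a` among the generators `x, y` of `R`. Now `2 • b * τ y` is
`τ (y * b) - (y * τ b - b * τ y)`, and `(m + 1) • x ^ m * y ^ n * τ x` is
`τ (x ^ (m + 1) * y ^ n) - x ^ (m + 1) * τ (y ^ n)`; this is where characteristic zero enters.
-/

theorem LieAlgebra.IsSimple.eq_top_of_lie_mem {K L : Type*} [CommRing K] [LieRing L]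
    [LieAlgebra K L] [LieAlgebra.IsSimple K L] {N : Submodule K L}
    (h : ∀ x y : L, ⁅x, y⁆ ∈ N) : N = ⊤ := by
  let J : LieIdeal K L := { N with lie_mem := fun {x m} _ => h x m }
  rcases IsSimple.eq_bot_or_eq_top J with hJ | hJ
  · refine (IsSimple.non_abelian (R := K) (L := L) ⟨fun x y => ?_⟩).elim
    simpa [J, hJ] using (show ⁅x, y⁆ ∈ J from h x y)
  · exact congrArg LieSubmodule.toSubmodule hJ

namespace Derivation

variable {k R : Type*}

section Bracket

variable [CommRing k] [CommRing R] [Algebra k R] (τ : Derivation k R R)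

theorem smul_lie_smul (a b : R) : ⁅a • τ, b • τ⁆ = (a * τ b - b * τ a) • τ := by
  ext c
  simp only [commutator_apply, smul_apply, leibniz, smul_eq_mul]
  ring

theorem lie_smul_self (b : R) : ⁅τ, b • τ⁆ = τ b • τ := by
  simp

def twoBracketCoeff (y : R) : R × R →ₗ[k] R :=
  LinearMap.coprod τ.toLinearMap
    (LinearMap.mulLeft k y ∘ₗ τ.toLinearMap - LinearMap.mulRight k (τ y))

theorem twoBracketCoeff_apply (y f g : R) :
    τ.twoBracketCoeff y (f, g) = τ f + (y * τ g - g * τ y) := rfl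

theorem twoBracketCoeff_smul (y f g : R) :
    τ.twoBracketCoeff y (f, g) • τ = ⁅τ, f • τ⁆ + ⁅y • τ, g • τ⁆ := by
  rw [lie_smul_self, smul_lie_smul, twoBracketCoeff_apply, add_smul]

theorem apply_mem_range_twoBracketCoeff (y f : R) :
    τ f ∈ LinearMap.range (τ.twoBracketCoeff y) :=
  ⟨(f, 0), by simp [twoBracketCoeff_apply]⟩

theorem mul_apply_sub_mem_range_twoBracketCoeff (y g : R) :
    y * τ g - g * τ y ∈ LinearMap.range (τ.twoBracketCoeff y) :=
  ⟨(0, g), by simp [twoBracketCoeff_apply]⟩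

end Bracket

section CharZero

variable [Field k] [CharZero k] [CommRing R] [Algebra k R] (τ : Derivation k R R) (x y : R)

theorem mul_apply_self_mem_range_twoBracketCoeff (c : R) :
    c * τ y ∈ LinearMap.range (τ.twoBracketCoeff y) := by
  have h2 : τ (y * c) - (y * τ c - c * τ y) = (2 : k) • (c * τ y) := by
    rw [leibniz, two_smul, smul_eq_mul, smul_eq_mul]
    ring
  have hc : c * τ y = (2 : k)⁻¹ • (τ (y * c) - (y * τ c - c * τ y)) := by
    rw [h2, inv_smul_smul₀ two_ne_zero]
  rw [hc]
  exact Submodule.smul_mem _ _ (sub_mem (τ.apply_mem_range_twoBracketCoeff y _)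
    (τ.mul_apply_sub_mem_range_twoBracketCoeff y c))

theorem mul_apply_pow_mem_range_twoBracketCoeff (n : ℕ) (c : R) :
    c * τ (y ^ n) ∈ LinearMap.range (τ.twoBracketCoeff y) := by
  induction n generalizing c with
  | zero => simp
  | succ n ih =>
    rw [pow_succ', leibniz, smul_eq_mul, smul_eq_mul, mul_add, ← mul_assoc, ← mul_assoc]
    exact add_mem (ih _) (τ.mul_apply_self_mem_range_twoBracketCoeff y _)

theorem pow_mul_pow_mul_apply_mem_range_twoBracketCoeff (m n : ℕ) :
    x ^ m * y ^ n * τ x ∈ LinearMap.range (τ.twoBracketCoeff y) := by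
  have hm : ((m : k) + 1) • (x ^ m * y ^ n * τ x)
      = τ (x ^ (m + 1) * y ^ n) - x ^ (m + 1) * τ (y ^ n) := by
    rw [leibniz, τ.leibniz_pow x (m + 1), smul_eq_mul, smul_eq_mul, Nat.add_sub_cancel,
      add_sub_cancel_left, ← Nat.cast_smul_eq_nsmul k, Nat.cast_succ]
    simp only [mul_smul_comm]
    ring_nf
  rw [← inv_smul_smul₀ (Nat.cast_add_one_ne_zero m : ((m : k) + 1) ≠ 0) (x ^ m * y ^ n * τ x),
    hm]
  exact Submodule.smul_mem _ _ (sub_mem (τ.apply_mem_range_twoBracketCoeff y _)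
    (τ.mul_apply_pow_mem_range_twoBracketCoeff y n _))

variable {x y}

theorem mul_apply_left_mem_range_twoBracketCoeff (hgen : Algebra.adjoin k {x, y} = ⊤) (b : R) :
    b * τ x ∈ LinearMap.range (τ.twoBracketCoeff y) := by
  have hb : b ∈ Submodule.span k (Submonoid.closure {x, y} : Set R) := by
    rw [← Algebra.adjoin_eq_span, hgen]
    trivial
  induction hb using Submodule.span_induction with
  | mem b hb =>
    obtain ⟨m, n, rfl⟩ := (Submonoid.mem_closure_pair x y b).mp hb
    exact τ.pow_mul_pow_mul_apply_mem_range_twoBracketCoeff x y m n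
  | zero => simp
  | add b c _ _ hb hc => rw [add_mul]; exact add_mem hb hc
  | smul r b _ hb => rw [smul_mul_assoc]; exact Submodule.smul_mem _ r hb

theorem mul_apply_mem_range_twoBracketCoeff (hgen : Algebra.adjoin k {x, y} = ⊤) (a b : R) :
    b * τ a ∈ LinearMap.range (τ.twoBracketCoeff y) := by
  have ha : a ∈ Algebra.adjoin k {x, y} := hgen ▸ trivial
  induction ha using Algebra.adjoin_induction generalizing b with
  | mem a ha =>
    rcases ha with rfl | rfl
    · exact τ.mul_apply_left_mem_range_twoBracketCoeff hgen b
    · exact τ.mul_apply_self_mem_range_twoBracketCoeff _ b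
  | algebraMap r => simp
  | add a c _ _ ha hc => rw [map_add, mul_add]; exact add_mem (ha b) (hc b)
  | mul a c _ _ ha hc =>
    rw [leibniz, smul_eq_mul, smul_eq_mul, mul_add, ← mul_assoc, ← mul_assoc]
    exact add_mem (hc _) (ha _)

theorem exists_eq_lie_add_lie (hgen : Algebra.adjoin k {x, y} = ⊤)
    (hτ : Function.Surjective (fun r : R => r • τ)) [LieAlgebra.IsSimple k (Derivation k R R)]
    (D : Derivation k R R) : ∃ f g : R, D = ⁅τ, f • τ⁆ + ⁅y • τ, g • τ⁆ := by
  let N : Submodule k (Derivation k R R) := LinearMap.range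
    ((LinearMap.toSpanSingleton R _ τ).restrictScalars k ∘ₗ τ.twoBracketCoeff y)
  have hN : N = ⊤ := LieAlgebra.IsSimple.eq_top_of_lie_mem fun E F => by
    obtain ⟨a, rfl⟩ := hτ E
    obtain ⟨b, rfl⟩ := hτ F
    obtain ⟨p, hp⟩ := sub_mem (τ.mul_apply_mem_range_twoBracketCoeff hgen b a)
      (τ.mul_apply_mem_range_twoBracketCoeff hgen a b)
    refine ⟨p, ?_⟩
    change τ.twoBracketCoeff y p • τ = _
    rw [hp, smul_lie_smul]
  obtain ⟨⟨f, g⟩, hfg⟩ : D ∈ N := hN ▸ Submodule.mem_top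
  exact ⟨f, g, by rw [← twoBracketCoeff_smul, ← hfg]; rfl⟩

end CharZero

end Derivation

open MvPolynomial in
theorem Ideal.Quotient.adjoin_mk_X_eq_top {k : Type*} [CommRing k]
    (I : Ideal (MvPolynomial (Fin 2) k)) :
    Algebra.adjoin k {Ideal.Quotient.mk I (X 0), Ideal.Quotient.mk I (X 1)} = ⊤ := by
  have h : ({Ideal.Quotient.mk I (X 0), Ideal.Quotient.mk I (X 1)} : Set _)
      = Ideal.Quotient.mkₐ k I '' Set.range X := by
    ext
    simp [Fin.exists_fin_two, eq_comm]
  rw [h, Algebra.adjoin_image, adjoin_range_X, Algebra.map_top, AlgHom.range_eq_top]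
  exact Ideal.Quotient.mkₐ_surjective k I

theorem stmt_3_general (k : Type*) [Field k] [CharZero k]
    (I : Ideal (MvPolynomial (Fin 2) k))
    (τ : Derivation k (MvPolynomial (Fin 2) k ⧸ I) (MvPolynomial (Fin 2) k ⧸ I))
    (hbij : Function.Bijective
      (fun r : MvPolynomial (Fin 2) k ⧸ I => r • τ))
    (hsimple : LieAlgebra.IsSimple k
      (Derivation k (MvPolynomial (Fin 2) k ⧸ I) (MvPolynomial (Fin 2) k ⧸ I)))
    (D : Derivation k (MvPolynomial (Fin 2) k ⧸ I) (MvPolynomial (Fin 2) k ⧸ I)) :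
    ∃ f g : MvPolynomial (Fin 2) k ⧸ I,
      D = ⁅τ, f • τ⁆ + ⁅(Ideal.Quotient.mk I (MvPolynomial.X 1)) • τ, g • τ⁆ :=
  τ.exists_eq_lie_add_lie (Ideal.Quotient.adjoin_mk_X_eq_top I) hbij.surjective D

/-- Explicit two-bracket decomposition from the plane-curve case of Theorem A. -/
theorem stmt_3 (k : Type*) [Field k] [CharZero k]
    (I : Ideal (MvPolynomial (Fin 2) k))
    (τ' : Derivation k (MvPolynomial (Fin 2) k) (MvPolynomial (Fin 2) k))
    (hτ' : ∀ a ∈ I, τ' a ∈ I)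
    (τ : Derivation k (MvPolynomial (Fin 2) k ⧸ I) (MvPolynomial (Fin 2) k ⧸ I))
    (hτ : ∀ a : MvPolynomial (Fin 2) k,
      τ (Ideal.Quotient.mk I a) = Ideal.Quotient.mk I (τ' a))
    (hbij : Function.Bijective
      (fun r : MvPolynomial (Fin 2) k ⧸ I => r • τ))
    (hsimple : LieAlgebra.IsSimple k
      (Derivation k (MvPolynomial (Fin 2) k ⧸ I) (MvPolynomial (Fin 2) k ⧸ I)))
    (D : Derivation k (MvPolynomial (Fin 2) k ⧸ I) (MvPolynomial (Fin 2) k ⧸ I)) :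
    ∃ f g : MvPolynomial (Fin 2) k ⧸ I,
      D = ⁅τ, f • τ⁆ + ⁅(Ideal.Quotient.mk I (MvPolynomial.X 1)) • τ, g • τ⁆ :=
  stmt_3_general k I τ hbij hsimple D
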